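/- arXiv:1601.03193 — 2 statements merged into one kernel-verified Lean document; each statement's English description precedes it below -/
import Mathlib

section
/- Let b(x) = log|x| and f = χ_{(0,1)}. There exists c > 0 such that for all sufficiently large t > 0, |{x ∈ (0,1) : |[b,H]f(x)| > t}| ≥ e^{−√(ct)}, where H is the Hilbert transform. In particular the subgaussian local decay e^{−√(ct)} for commutators [b,T] of Calderón–Zygmund operators cannot be improved to an exponential decay e^{−ct}. -/
/-!
For `0 < x < 1` the integrand `(log x - log y) / (x - y)` is the slope of the increasing concave
function `log` between `y` and `x`, hence nonnegative and at most `1 / min x y`. For `y > x` it is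
at least `(log y - log x) / y`, whose integral over `(√x, 1)` is `(3/8) (log x)²`. So the commutator
exceeds `t` on all of `(0, exp (-√(8t/3)))`.
-/

open MeasureTheory Set Real

namespace Real

lemma slope_log_nonneg {x y : ℝ} (hx : 0 < x) (hy : 0 < y) : 0 ≤ slope log x y :=
  strictMonoOn_log.monotoneOn.slope_nonneg hx hy

lemma slope_log_le_inv_min {x y : ℝ} (hx : 0 < x) (hy : 0 < y) : slope log x y ≤ (min x y)⁻¹ := by
  rcases lt_trichotomy x y with hxy | rfl | hxy
  · rw [min_eq_left hxy.le]
    exact strictConcaveOn_log_Ioi.concaveOn.slope_le_of_hasDerivAt hx hy hxy (hasDerivAt_log hx.ne')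
  · simp [hx.le]
  · rw [min_eq_right hxy.le, slope_comm]
    exact strictConcaveOn_log_Ioi.concaveOn.slope_le_of_hasDerivAt hy hx hxy (hasDerivAt_log hy.ne')

lemma div_le_slope_log {x y : ℝ} (hx : 0 < x) (hxy : x < y) :
    (log y - log x) / y ≤ slope log x y := by
  rw [slope_def_field]
  exact div_le_div_of_nonneg_left (sub_nonneg.2 (log_le_log hx hxy.le)) (sub_pos.2 hxy)
    (by linarith)

lemma slope_log_le_of_le_one {x y : ℝ} (hx : 0 < x) (hx1 : x ≤ 1) (hy : 0 < y) :
    slope log y x ≤ 2 / x * (1 + |log y|) := by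
  rcases le_or_gt y (x / 2) with hyx | hyx
  · have hnum : log x - log y ≤ |log y| := by
      linarith [log_nonpos hx.le hx1, neg_le_abs (log y)]
    calc slope log y x = (log x - log y) / (x - y) := slope_def_field _ _ _
      _ ≤ |log y| / (x / 2) :=
        div_le_div₀ (abs_nonneg _) hnum (by positivity) (by linarith)
      _ = 2 / x * |log y| := by field_simp
      _ ≤ 2 / x * (1 + |log y|) := by gcongr; linarith
  · calc slope log y x ≤ (min y x)⁻¹ := slope_log_le_inv_min hy hx
      _ ≤ 2 / x := by
        rw [inv_le_comm₀ (lt_min hy hx) (by positivity), inv_div]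
        exact le_min hyx.le (by linarith)
      _ ≤ 2 / x * (1 + |log y|) := le_mul_of_one_le_right (by positivity) (by simp)

lemma intervalIntegrable_slope_log {x : ℝ} (hx : 0 < x) (hx1 : x ≤ 1) :
    IntervalIntegrable (fun y => slope log y x) volume 0 1 := by
  have hbound : IntervalIntegrable (fun y => 2 / x * (1 + |log y|)) volume 0 1 :=
    (intervalIntegrable_const.add intervalIntegral.intervalIntegrable_log'.abs).const_mul _
  refine hbound.mono_fun ?_ ?_
  · simp only [slope_def_field]
    exact ((measurable_const.sub measurable_log).div (measurable_const.sub measurable_id))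
      |>.aestronglyMeasurable
  · rw [uIoc_of_le zero_le_one]
    filter_upwards [ae_restrict_mem measurableSet_Ioc] with y hy
    rw [norm_of_nonneg (slope_log_nonneg hy.1 hx)]
    exact (slope_log_le_of_le_one hx hx1 hy.1).trans (le_abs_self _)

lemma intervalIntegrable_log_sub_div {a b : ℝ} (c : ℝ) (ha : 0 < a) (hb : 0 < b) :
    IntervalIntegrable (fun y => (log y - c) / y) volume a b := by
  have hne : ∀ y ∈ uIcc a b, y ≠ 0 := fun y hy => ((lt_min ha hb).trans_le hy.1).ne'
  exact ContinuousOn.intervalIntegrable <|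
    ((continuousOn_log.mono hne).sub continuousOn_const).div continuousOn_id hne

lemma integral_log_sub_div {a b : ℝ} (c : ℝ) (ha : 0 < a) (hb : 0 < b) :
    ∫ y in a..b, (log y - c) / y = (log b - c) ^ 2 / 2 - (log a - c) ^ 2 / 2 := by
  refine intervalIntegral.integral_eq_sub_of_hasDerivAt (f := fun y => (log y - c) ^ 2 / 2)
    (fun y hy => ?_) (intervalIntegrable_log_sub_div c ha hb)
  have hy : y ≠ 0 := ((lt_min ha hb).trans_le hy.1).ne'
  refine ((((hasDerivAt_log hy).sub_const c).pow 2).div_const 2).congr_deriv ?_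
  field_simp
  ring

lemma sq_log_le_integral_slope_log {x : ℝ} (hx : 0 < x) (hx1 : x < 1) :
    3 / 8 * log x ^ 2 ≤ ∫ y in (0 : ℝ)..1, slope log y x := by
  have hs : 0 < √x := sqrt_pos.2 hx
  have hs1 : √x < 1 := (sqrt_lt' one_pos).2 (by simpa using hx1)
  have hxs : x < √x := lt_sqrt_self_iff.2 ⟨hx.ne', hx1⟩
  have hint := intervalIntegrable_slope_log hx hx1.le
  calc 3 / 8 * log x ^ 2 = ∫ y in √x..1, (log y - log x) / y := by
        rw [integral_log_sub_div _ hs one_pos, log_one, log_sqrt hx.le]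
        ring
    _ ≤ ∫ y in √x..1, slope log y x := by
        refine intervalIntegral.integral_mono_on hs1.le ?_ ?_ fun y hy => ?_
        · exact intervalIntegrable_log_sub_div _ hs one_pos
        · exact hint.mono_set (uIcc_subset_uIcc (by simp [hs.le, hs1.le]) (by simp))
        · rw [slope_comm]
          exact div_le_slope_log hx (hxs.trans_le hy.1)
    _ ≤ ∫ y in (0 : ℝ)..1, slope log y x := by
        refine intervalIntegral.integral_mono_interval hs.le hs1.le le_rfl ?_ hint
        filter_upwards [ae_restrict_mem measurableSet_Ioc] with y hy
        exact slope_log_nonneg hy.1 hx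

lemma lt_sq_log_of_lt_exp_neg_sqrt {s x : ℝ} (hx : 0 < x) (hxs : x < exp (-√s)) :
    s < log x ^ 2 := by
  have hlog : √s < -log x := by linarith [(log_lt_iff_lt_exp hx).2 hxs]
  rw [← neg_sq]
  exact (sqrt_lt' ((sqrt_nonneg s).trans_lt hlog)).1 hlog

end Real

/-- For `b x = log |x|` and `f = χ_(0,1)`, the commutator `[b,H]f` at `x ∈ (0,1)` is
interpreted as `∫ y in (0,1), (log x - log y)/(x - y) dy`. -/
theorem commutator_subgaussian_decay_sharp :
    ∃ c : ℝ, 0 < c ∧ ∃ t₀ : ℝ, 0 < t₀ ∧ ∀ t : ℝ, t₀ < t →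
      ENNReal.ofReal (Real.exp (-Real.sqrt (c * t))) ≤
        volume {x ∈ Set.Ioo (0:ℝ) 1 |
          t < |∫ y in (0:ℝ)..1, (Real.log |x| - Real.log |y|) / (x - y)|} := by
  refine ⟨8 / 3, by norm_num, 1, one_pos, fun t _ => ?_⟩
  have hsub : Ioo 0 (exp (-√(8 / 3 * t))) ⊆ {x ∈ Ioo (0 : ℝ) 1 |
      t < |∫ y in (0 : ℝ)..1, (log |x| - log |y|) / (x - y)|} := by
    rintro x ⟨hx, hxt⟩
    have hx1 : x < 1 := hxt.trans_le (exp_le_one_iff.2 (neg_nonpos.2 (sqrt_nonneg _)))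
    refine ⟨⟨hx, hx1⟩, ?_⟩
    simp only [log_abs, ← slope_def_field log]
    calc t < 3 / 8 * log x ^ 2 := by linarith [lt_sq_log_of_lt_exp_neg_sqrt hx hxt]
      _ ≤ _ := sq_log_le_integral_slope_log hx hx1
      _ ≤ _ := le_abs_self _
  calc ENNReal.ofReal (exp (-√(8 / 3 * t))) = volume (Ioo 0 (exp (-√(8 / 3 * t)))) := by
        rw [volume_Ioo, sub_zero]
    _ ≤ _ := measure_mono hsub
end

section
/- Let b(x) = log|x|, f = χ_{(0,1)} and H the Hilbert transform. Then for some constant c > 0 and all 1 < p < ∞, ‖[b,H]f‖_{L^p(ℝ)} ≥ c p². Consequently, no bound of the form ‖[b,H]‖_{L^p→L^p} ≤ C p (p')² (which grows only linearly in p as p → ∞) can control [b,H], contradicting any pointwise sparse domination of [b,H] by operators B_S f = Σ_{Q∈S}‖f‖_{L log L,Q}χ_Q. -/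
/-!
For `0 < x < 1` the kernel `(log x - log y)/(x - y)` is nonnegative, integrable in `y` (it is
at most `2/√(xy)`) and, for `y ≥ x`, at least `(log y - log x)/y`, whose integral over `[x, 1]`
is `(log x)²/2`. Hence `|[b,H]f| ≥ p²/2` on `(0, e^{-p})`, and the `L^p` norm is at least
`p²/2 · (e^{-p})^{1/p} = p²/(2e)`. Since `p (p')² ≤ 4p` for `p ≥ 2`, no bound `C p (p')²` can
dominate it.
-/

open MeasureTheory ENNReal Real Set

lemma log_sub_log_div_sub_nonneg {a b : ℝ} (ha : 0 < a) (hb : 0 < b) :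
    0 ≤ (log a - log b) / (a - b) := by
  rcases le_total a b with hab | hba
  · exact div_nonneg_of_nonpos (by linarith [log_le_log ha hab]) (by linarith)
  · exact div_nonneg (by linarith [log_le_log hb hba]) (by linarith)

-- A weak form of the inequality between the logarithmic and geometric means.
lemma log_sub_log_div_sub_le {a b : ℝ} (ha : 0 < a) (hb : 0 < b) :
    (log a - log b) / (a - b) ≤ 2 / (√a * √b) := by
  wlog hba : b < a generalizing a b
  · rcases (not_lt.mp hba).eq_or_lt with rfl | hab
    · rw [sub_self, zero_div]; positivity
    · simpa [← neg_div_neg_eq (log a - log b), mul_comm] using this hb ha hab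
  have hsa := sqrt_pos.mpr ha
  have hsb := sqrt_pos.mpr hb
  have hlog : log a - log b ≤ 2 * (√a / √b - 1) := by
    have h := log_le_sub_one_of_pos (div_pos hsa hsb)
    rw [log_div hsa.ne' hsb.ne', log_sqrt ha.le, log_sqrt hb.le] at h
    linarith
  rw [div_le_div_iff₀ (by linarith) (by positivity)]
  have hsqrt : √b < √a := sqrt_lt_sqrt hb.le hba
  calc (log a - log b) * (√a * √b) ≤ 2 * (√a / √b - 1) * (√a * √b) := by gcongr
    _ = 2 * (√a - √b) * √a := by field_simp
    _ ≤ 2 * (√a - √b) * (√a + √b) := by gcongr; linarith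
    _ = 2 * (a - b) := by
      linear_combination 2 * sq_sqrt ha.le - 2 * sq_sqrt hb.le

lemma intervalIntegrable_log_sub_log_div_sub {x b : ℝ} (hx : 0 < x) (hb : 0 ≤ b) :
    IntervalIntegrable (fun y => (log x - log y) / (x - y)) volume 0 b := by
  have hdom : IntervalIntegrable (fun y : ℝ => 2 / √x * y ^ (-(1/2) : ℝ)) volume 0 b :=
    (intervalIntegral.intervalIntegrable_rpow' (by norm_num)).const_mul _
  refine hdom.mono_fun' ((measurable_const.sub Real.measurable_log).div
    (measurable_const.sub measurable_id)).aestronglyMeasurable ?_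
  rw [uIoc_of_le hb]
  filter_upwards [ae_restrict_mem measurableSet_Ioc] with y hy
  rw [norm_of_nonneg (log_sub_log_div_sub_nonneg hx hy.1), rpow_neg hy.1.le, ← sqrt_eq_rpow,
    ← div_eq_mul_inv, div_div]
  exact log_sub_log_div_sub_le hx hy.1

lemma intervalIntegrable_log_sub_log_div_self {a b : ℝ} (ha : 0 < a) (hb : 0 < b) :
    IntervalIntegrable (fun y => (log y - log a) / y) volume a b := by
  have hne : ∀ y ∈ uIcc a b, y ≠ 0 := fun y hy =>
    ((lt_min ha hb).trans_le (by simpa [uIcc] using hy.1)).ne'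
  exact (((continuousOn_log.mono hne).sub continuousOn_const).div continuousOn_id
    hne).intervalIntegrable

lemma integral_log_sub_log_div_self {a b : ℝ} (ha : 0 < a) (hb : 0 < b) :
    ∫ y in a..b, (log y - log a) / y = (log b - log a) ^ 2 / 2 := by
  have hderiv : ∀ y ∈ uIcc a b,
      HasDerivAt (fun y : ℝ => (log y - log a) ^ 2 / 2) ((log y - log a) / y) y := by
    intro y hy
    have hy0 : y ≠ 0 := ((lt_min ha hb).trans_le (by simpa [uIcc] using hy.1)).ne'
    refine ((((hasDerivAt_log hy0).sub_const (log a)).pow 2).div_const 2).congr_deriv ?_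
    push_cast
    ring
  rw [intervalIntegral.integral_eq_sub_of_hasDerivAt hderiv
    (intervalIntegrable_log_sub_log_div_self ha hb)]
  simp

lemma sq_log_div_two_le_integral_log_sub_log_div_sub {x : ℝ} (hx0 : 0 < x) (hx1 : x ≤ 1) :
    log x ^ 2 / 2 ≤ ∫ y in (0:ℝ)..1, (log x - log y) / (x - y) := by
  have hint := intervalIntegrable_log_sub_log_div_sub hx0 zero_le_one
  have hminorant : ∀ y ∈ Icc x 1, (log y - log x) / y ≤ (log x - log y) / (x - y) := by
    rintro y ⟨hxy, -⟩
    rcases hxy.eq_or_lt with rfl | hxy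
    · simp
    rw [← neg_div_neg_eq (log x - log y), neg_sub, neg_sub]
    exact div_le_div_of_nonneg_left (by linarith [log_le_log hx0 hxy.le]) (by linarith)
      (by linarith)
  calc log x ^ 2 / 2 = ∫ y in x..1, (log y - log x) / y := by
        rw [integral_log_sub_log_div_self hx0 one_pos, Real.log_one, zero_sub, neg_sq]
    _ ≤ ∫ y in x..1, (log x - log y) / (x - y) := by
        refine intervalIntegral.integral_mono_on hx1
          (intervalIntegrable_log_sub_log_div_self hx0 one_pos)
          (hint.mono_set (uIcc_subset_uIcc (mem_uIcc_of_le hx0.le hx1) right_mem_uIcc)) hminorant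
    _ ≤ ∫ y in (0:ℝ)..1, (log x - log y) / (x - y) :=
        intervalIntegral.integral_mono_interval hx0.le hx1 le_rfl ?_ hint
  filter_upwards [ae_restrict_mem measurableSet_Ioc] with y hy
  exact log_sub_log_div_sub_nonneg hx0 hy.1

/-- `[b,H]χ_(0,1)` for `b = log |·|`, the Hilbert transform taken without its factor `1/π`. -/
noncomputable def logCommutatorIndicator (x : ℝ) : ℝ :=
  ∫ y in (0:ℝ)..1, (log |x| - log |y|) / (x - y)

lemma sq_log_div_two_le_logCommutatorIndicator {x : ℝ} (hx0 : 0 < x) (hx1 : x ≤ 1) :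
    log x ^ 2 / 2 ≤ logCommutatorIndicator x := by
  have hcongr : EqOn (fun y => (log |x| - log |y|) / (x - y))
      (fun y => (log x - log y) / (x - y)) (uIcc 0 1) := by
    intro y hy
    rw [uIcc_of_le zero_le_one] at hy
    simp only [abs_of_pos hx0, abs_of_nonneg hy.1]
  rw [logCommutatorIndicator, intervalIntegral.integral_congr hcongr]
  exact sq_log_div_two_le_integral_log_sub_log_div_sub hx0 hx1

lemma mul_measure_rpow_le_lintegral_rpow_rpow {α : Type*} [MeasurableSpace α] {μ : Measure α}
    {s : Set α} {g : α → ℝ≥0∞} {a : ℝ≥0∞} {p : ℝ} (hp : 0 < p)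
    (hs : MeasurableSet s) (h : ∀ x ∈ s, a ≤ g x) :
    a * μ s ^ (1 / p) ≤ (∫⁻ x, g x ^ p ∂μ) ^ (1 / p) := by
  have hmarkov : a ^ p * μ s ≤ ∫⁻ x, g x ^ p ∂μ :=
    calc a ^ p * μ s = ∫⁻ _ in s, a ^ p ∂μ := (setLIntegral_const s _).symm
      _ ≤ ∫⁻ x in s, g x ^ p ∂μ :=
        setLIntegral_mono' hs fun x hx => rpow_le_rpow (h x hx) hp.le
      _ ≤ ∫⁻ x, g x ^ p ∂μ := setLIntegral_le_lintegral s _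
  calc a * μ s ^ (1 / p) = (a ^ p * μ s) ^ (1 / p) := by
        rw [mul_rpow_of_nonneg _ _ (by positivity), ← ENNReal.rpow_mul,
          mul_one_div_cancel hp.ne', ENNReal.rpow_one]
    _ ≤ _ := rpow_le_rpow hmarkov (by positivity)

lemma ofReal_mul_sq_le_lintegral_logCommutatorIndicator {p : ℝ} (hp : 1 < p) :
    ENNReal.ofReal (1 / 6 * p ^ 2) ≤
      (∫⁻ x in Ioo (0:ℝ) 1, ENNReal.ofReal |logCommutatorIndicator x| ^ p) ^ (1 / p) := by
  have hp0 : 0 < p := one_pos.trans hp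
  set t := exp (-p)
  have ht1 : t < 1 := exp_lt_one_iff.mpr (by linarith)
  have hbound : ∀ x ∈ Ioo 0 t,
      ENNReal.ofReal (p ^ 2 / 2) ≤ ENNReal.ofReal |logCommutatorIndicator x| := by
    rintro x ⟨hx0, hxt⟩
    have hlog : log x < -p := by simpa [t] using log_lt_log hx0 hxt
    refine ofReal_le_ofReal ?_
    calc p ^ 2 / 2 ≤ log x ^ 2 / 2 := by nlinarith
      _ ≤ logCommutatorIndicator x := sq_log_div_two_le_logCommutatorIndicator hx0 (by linarith)
      _ ≤ _ := le_abs_self _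
  have hvol : (volume.restrict (Ioo (0:ℝ) 1)) (Ioo 0 t) = ENNReal.ofReal t := by
    rw [Measure.restrict_apply measurableSet_Ioo, inter_eq_left.mpr (Ioo_subset_Ioo_right ht1.le),
      volume_Ioo, sub_zero]
  have h := mul_measure_rpow_le_lintegral_rpow_rpow (μ := volume.restrict (Ioo 0 1)) hp0
    measurableSet_Ioo hbound
  rw [hvol, ofReal_rpow_of_pos (exp_pos _), ← ofReal_mul (by positivity), ← exp_mul] at h
  refine le_trans (ofReal_le_ofReal ?_) h
  rw [show -p * (1 / p) = -1 by field_simp, exp_neg]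
  calc 1 / 6 * p ^ 2 = p ^ 2 / 2 * 3⁻¹ := by ring
    _ ≤ p ^ 2 / 2 * (exp 1)⁻¹ := by gcongr; exact exp_one_lt_three.le

lemma not_forall_mul_sq_le_mul_mul_conjExponent_sq {c C : ℝ} (hc : 0 < c) :
    ¬ ∀ p : ℝ, 1 < p → c * p ^ 2 ≤ C * p * (p / (p - 1)) ^ 2 := by
  intro h
  set p := 4 * max C 0 / c + 2
  have hp2 : 2 ≤ p := le_add_of_nonneg_left (by positivity)
  have hcp : c * p = 4 * max C 0 + 2 * c := by simp only [p]; field_simp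
  have hconj : p / (p - 1) ≤ 2 := by rw [div_le_iff₀ (by linarith)]; linarith
  have hconj0 : 0 ≤ p / (p - 1) := div_nonneg (by linarith) (by linarith)
  have : c * p ^ 2 ≤ max C 0 * p * 2 ^ 2 :=
    calc c * p ^ 2 ≤ C * p * (p / (p - 1)) ^ 2 := h p (by linarith)
      _ ≤ max C 0 * p * 2 ^ 2 := by gcongr; exact le_max_left C 0
  nlinarith

/-- For `b x = log |x|`, `f = χ_(0,1)` and `H` the Hilbert transform, interpreting
`[b,H]f(x) = ∫ y in (0,1), (log|x| - log|y|)/(x-y) dy` for `x ∈ (0,1)`, the `L^p` norm of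
the commutator grows at least like `p²`; consequently no bound `‖[b,H]f‖_p ≤ C p (p')²`
(as would follow from an `L log L` sparse domination) is possible. -/
theorem commutator_Lp_lower_bound_p_squared :
    ∃ c : ℝ, 0 < c ∧
      (∀ p : ℝ, 1 < p →
        ENNReal.ofReal (c * p ^ 2) ≤
          (∫⁻ x in Set.Ioo (0:ℝ) 1,
            ENNReal.ofReal |∫ y in (0:ℝ)..1, (Real.log |x| - Real.log |y|) / (x - y)| ^ p)
            ^ (1/p)) ∧
      ¬ ∃ C : ℝ, 0 < C ∧ ∀ p : ℝ, 1 < p →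
        (∫⁻ x in Set.Ioo (0:ℝ) 1,
          ENNReal.ofReal |∫ y in (0:ℝ)..1, (Real.log |x| - Real.log |y|) / (x - y)| ^ p)
          ^ (1/p) ≤ ENNReal.ofReal (C * p * (p/(p-1))^2) := by
  refine ⟨1 / 6, by norm_num,
    fun p hp => ofReal_mul_sq_le_lintegral_logCommutatorIndicator hp, ?_⟩
  rintro ⟨C, hC, hupper⟩
  refine not_forall_mul_sq_le_mul_mul_conjExponent_sq (C := C) (c := 1 / 6) (by norm_num)
    fun p hp => ?_
  have hp0 : 0 < p := one_pos.trans hp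
  exact (ofReal_le_ofReal_iff (by positivity)).mp
    ((ofReal_mul_sq_le_lintegral_logCommutatorIndicator hp).trans (hupper p hp))
end
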